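/- Consider the bilevel problem max over x_c of (min over y of [x̄; x_c; 0]^T y subject to A_eq y = b_eq and A_ineq y ≤ B_ineq x_l), with x_l fixed. If the single-level reformulation max { b_eq^T λ + x_l^T B_ineq^T μ : [x̄; x_c] + A_eq^T λ + A_ineq^T μ = 0, μ ≥ 0 } (jointly over x_c, λ, μ) is feasible and the LP min { [x̄; 0; 0]^T y : A_eq y = b_eq, A_ineq y ≤ B_ineq x_l, the x_c-block of y equals 0 } is infeasible, then the bilevel objective is unbounded above in x_c. -/

import Mathlib

open Matrix Finset

variable {E : Type*} [NormedAddCommGroup E] [InnerProductSpace ℝ E] [FiniteDimensional ℝ E]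

/-- The cone generated by a finite family of vectors. -/
def coneSet {ι : Type*} [Fintype ι] (v : ι → E) : Set E :=
  {x | ∃ c : ι → ℝ, 0 ≤ c ∧ x = ∑ i, c i • v i}

lemma self_mem_coneSet {ι : Type*} [Fintype ι] [DecidableEq ι] (v : ι → E) (k : ι) :
    v k ∈ coneSet v := by
  refine ⟨fun i => if i = k then 1 else 0, fun i => by positivity, ?_⟩
  simp [ite_smul]

lemma cone_caratheodory {ι : Type*} [Fintype ι] [DecidableEq ι] (v : ι → E) {x : E}
    (hx : x ∈ coneSet v) :
    ∃ c : ι → ℝ, 0 ≤ c ∧ x = ∑ i, c i • v i ∧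
      LinearIndependent ℝ (fun i : {i : ι // c i ≠ 0} => v (i : ι)) := by
  obtain ⟨c, hc, hsum⟩ := hx
  suffices H : ∀ (N : ℕ) (c : ι → ℝ), (univ.filter fun i => c i ≠ 0).card ≤ N → 0 ≤ c →
      x = ∑ i, c i • v i → ∃ c' : ι → ℝ, 0 ≤ c' ∧ x = ∑ i, c' i • v i ∧
        LinearIndependent ℝ (fun i : {i : ι // c' i ≠ 0} => v (i : ι)) by
    exact H _ c le_rfl hc hsum
  intro N
  induction N with
  | zero =>
    intro c hcard hc hsum
    refine ⟨c, hc, hsum, ?_⟩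
    have hempty : IsEmpty {i : ι // c i ≠ 0} := by
      constructor
      rintro ⟨i, hi⟩
      have : i ∈ univ.filter fun i => c i ≠ 0 := by simp [hi]
      have := Finset.card_pos.mpr ⟨i, this⟩
      omega
    exact linearIndependent_empty_type
  | succ N ih =>
    intro c hcard hc hsum
    by_cases hind : LinearIndependent ℝ (fun i : {i : ι // c i ≠ 0} => v (i : ι))
    · exact ⟨c, hc, hsum, hind⟩
    haveI : Fintype {i : ι // c i ≠ 0} := Fintype.ofFinite _
    obtain ⟨g, hg0, i₁, hgi₁⟩ := Fintype.not_linearIndependent_iff.mp hind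
    set d : ι → ℝ := fun i => if h : c i ≠ 0 then g ⟨i, h⟩ else 0 with hd
    have hdsum : ∑ i, d i • v i = 0 := by
      have h1 : ∑ i ∈ univ.filter (fun i => c i ≠ 0), d i • v i = ∑ i : ι, d i • v i :=
        Finset.sum_filter_of_ne (fun i _ h => by
          intro hci
          exact h (by simp [hd, hci]))
      have h2 : ∑ i ∈ univ.filter (fun i => c i ≠ 0), d i • v i
          = ∑ i : {i : ι // c i ≠ 0}, d (i : ι) • v (i : ι) :=
        Finset.sum_subtype _ (fun i => by simp) _
      rw [← h1, h2, ← hg0]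
      exact Finset.sum_congr rfl fun i _ => by simp [hd, i.2]
    have hdsupp : ∀ i, c i = 0 → d i = 0 := fun i hi => by simp [hd, hi]
    have hdne : d i₁ ≠ 0 := by simpa [hd, i₁.2] using hgi₁
    -- WLOG some entry of d is positive
    obtain ⟨e, hesum, hesupp, i₂, hei₂⟩ :
        ∃ e : ι → ℝ, ∑ i, e i • v i = 0 ∧ (∀ i, c i = 0 → e i = 0) ∧ ∃ i, 0 < e i := by
      rcases lt_or_gt_of_ne hdne with h | h
      · exact ⟨-d, by simpa using hdsum, fun i hi => by simp [hdsupp i hi],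
          ⟨i₁, by simpa using h⟩⟩
      · exact ⟨d, hdsum, hdsupp, ⟨i₁, h⟩⟩
    -- take the largest step `t` along `-e` keeping coefficients nonnegative
    set P : Finset ι := univ.filter fun i => 0 < e i with hP
    have hPne : P.Nonempty := ⟨i₂, by simp [hP, hei₂]⟩
    obtain ⟨i₀, hi₀P, hi₀min⟩ := Finset.exists_min_image P (fun i => c i / e i) hPne
    have hei₀ : 0 < e i₀ := by simpa [hP] using hi₀P
    set t : ℝ := c i₀ / e i₀ with ht
    have ht0 : 0 ≤ t := div_nonneg (hc i₀) hei₀.le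
    set c' : ι → ℝ := fun i => c i - t * e i with hc'
    have hc'0 : 0 ≤ c' := by
      intro i
      by_cases hei : 0 < e i
      · have := hi₀min i (by simp [hP, hei])
        have : t * e i ≤ c i := by
          rw [← le_div_iff₀ hei]; exact this
        simpa [hc'] using this
      · have : t * e i ≤ 0 := mul_nonpos_of_nonneg_of_nonpos ht0 (le_of_not_gt hei)
        have := le_trans this (hc i)
        simpa [hc'] using this
    have hc'sum : x = ∑ i, c' i • v i := by
      have : ∑ i, c' i • v i = ∑ i, c i • v i - t • ∑ i, e i • v i := by
        rw [Finset.smul_sum, ← Finset.sum_sub_distrib]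
        exact Finset.sum_congr rfl fun i _ => by
          rw [smul_smul, ← sub_smul]
      rw [this, hesum, smul_zero, sub_zero, hsum]
    have hsubset : (univ.filter fun i => c' i ≠ 0) ⊂ (univ.filter fun i => c i ≠ 0) := by
      constructor
      · intro i hi
        simp only [Finset.mem_filter, Finset.mem_univ, true_and] at hi ⊢
        intro hci
        exact hi (by simp [hc', hci, hesupp i hci])
      · intro hsub
        have hci₀ : c i₀ ≠ 0 := by
          intro h
          have := hesupp i₀ h
          exact absurd this (ne_of_gt hei₀)
        have hmem : i₀ ∈ univ.filter fun i => c i ≠ 0 := by simp [hci₀]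
        have := hsub hmem
        simp only [Finset.mem_filter, Finset.mem_univ, true_and] at this
        exact this (by show c i₀ - t * e i₀ = 0; rw [ht, div_mul_cancel₀ _ hei₀.ne', sub_self])
    have hcard' : (univ.filter fun i => c' i ≠ 0).card ≤ N := by
      have := Finset.card_lt_card hsubset
      omega
    exact ih c' hcard' hc'0 hc'sum

lemma isClosed_coneSet_of_linearIndependent {ι : Type*} [Fintype ι] {v : ι → E}
    (hv : LinearIndependent ℝ v) : IsClosed (coneSet v) := by
  classical
  set L : (ι → ℝ) →ₗ[ℝ] E := Fintype.linearCombination ℝ v with hL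
  have hker : LinearMap.ker L = ⊥ := by
    rw [LinearMap.ker_eq_bot']
    intro c hcz
    have := Fintype.linearIndependent_iff.mp hv c (by
      simpa [hL, Fintype.linearCombination_apply] using hcz)
    exact funext this
  have hemb := LinearMap.isClosedEmbedding_of_injective (f := L) hker
  have himg : coneSet v = L '' {c : ι → ℝ | 0 ≤ c} := by
    ext x
    constructor
    · rintro ⟨c, hc, rfl⟩
      exact ⟨c, hc, by simp [hL, Fintype.linearCombination_apply]⟩
    · rintro ⟨c, hc, rfl⟩
      exact ⟨c, hc, by simp [hL, Fintype.linearCombination_apply]⟩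
  have hclosed : IsClosed {c : ι → ℝ | 0 ≤ c} := by
    have : {c : ι → ℝ | 0 ≤ c} = ⋂ i, (fun c : ι → ℝ => c i) ⁻¹' Set.Ici 0 := by
      ext c; simp [Pi.le_def, Set.mem_iInter]
    rw [this]
    exact isClosed_iInter fun i => isClosed_Ici.preimage (continuous_apply i)
  rw [himg]
  exact hemb.isClosedMap _ hclosed

lemma isClosed_coneSet {ι : Type*} [Fintype ι] (v : ι → E) : IsClosed (coneSet v) := by
  classical
  have hunion : coneSet v =
      ⋃ s : {s : Finset ι // LinearIndependent ℝ (fun i : (s : Finset ι) => v (i : ι))},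
        coneSet (fun i : ((s : Finset ι) : Finset ι) => v (i : ι)) := by
    ext x
    simp only [Set.mem_iUnion]
    constructor
    · intro hx
      obtain ⟨c, hc, hsum, hind⟩ := cone_caratheodory v hx
      set s : Finset ι := univ.filter fun i => c i ≠ 0 with hs
      have hmem : ∀ i : ι, i ∈ s ↔ c i ≠ 0 := fun i => by simp [hs]
      have hind' : LinearIndependent ℝ (fun i : s => v (i : ι)) := by
        have hfe : (fun i : {i : ι // i ∈ s} => v (i : ι))
            = (fun i : {i : ι // c i ≠ 0} => v (i : ι)) ∘ (Equiv.subtypeEquivRight hmem) := by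
          ext i; simp [Equiv.subtypeEquivRight]; rfl
        rw [hfe]
        exact (linearIndependent_equiv (Equiv.subtypeEquivRight hmem)).mpr hind
      refine ⟨⟨s, hind'⟩, fun i => c (i : ι), fun i => hc _, ?_⟩
      have h1 : ∑ i ∈ s, c i • v i = ∑ i : ι, c i • v i :=
        Finset.sum_filter_of_ne (fun i _ h hci => h (by simp [hci]))
      have h2 : ∑ i : s, c (i : ι) • v (i : ι) = ∑ i ∈ s, c i • v i :=
        Finset.sum_coe_sort s (fun i => c i • v i)
      rw [hsum, ← h1, ← h2]
    · rintro ⟨⟨s, hind⟩, c, hc, hsum⟩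
      refine ⟨fun i => if h : i ∈ s then c ⟨i, h⟩ else 0, ?_, ?_⟩
      · intro i
        dsimp only
        split
        · exact hc _
        · exact le_refl 0
      · have h2 : ∑ i : s, c i • v (i : ι)
            = ∑ i ∈ s, (if h : i ∈ s then c ⟨i, h⟩ else 0) • v i := by
          rw [← Finset.sum_coe_sort s
            (fun i => (if h : i ∈ s then c ⟨i, h⟩ else 0) • v i)]
          exact Finset.sum_congr rfl fun i _ => by simp [i.2]
        have h3 : ∑ i ∈ s, (if h : i ∈ s then c ⟨i, h⟩ else 0) • v i
            = ∑ i : ι, (if h : i ∈ s then c ⟨i, h⟩ else 0) • v i := by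
          refine Finset.sum_subset (Finset.subset_univ _) fun i _ hi => ?_
          simp [hi]
        rw [hsum]
        dsimp only at h2 ⊢
        rw [h2, h3]
  rw [hunion]
  exact isClosed_iUnion_of_finite fun s =>
    isClosed_coneSet_of_linearIndependent s.2

open scoped InnerProductSpace

lemma sum_smul_apply {m ι : Type*} [Fintype m] [Fintype ι]
    (c : ι → ℝ) (v : ι → EuclideanSpace ℝ m) (i : m) :
    (∑ k, c k • v k) i = ∑ k, c k * v k i := by
  classical
  induction (Finset.univ : Finset ι) using Finset.induction with
  | empty => rfl
  | insert a s h ih =>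
    rw [Finset.sum_insert h, Finset.sum_insert h, ← ih]
    rfl

/-- Farkas' lemma: an infeasible system of linear inequalities admits a
nonnegative combination equal to `0 ≤ -1`. -/
theorem farkas_lemma {m n : Type*} [Fintype m] [Fintype n] [DecidableEq m]
    (A : Matrix m n ℝ) (b : m → ℝ)
    (h : ¬ ∃ y : n → ℝ, A *ᵥ y ≤ b) :
    ∃ u : m → ℝ, 0 ≤ u ∧ u ᵥ* A = 0 ∧ b ⬝ᵥ u < 0 := by
  classical
  set v : (n ⊕ n ⊕ m) → EuclideanSpace ℝ m := Sum.elim (fun j => WithLp.toLp 2 (fun i => A i j))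
    (Sum.elim (fun j => WithLp.toLp 2 (fun i => -A i j))
      (fun i₀ => WithLp.toLp 2 (fun i => if i = i₀ then 1 else 0))) with hv
  have hcomb : ∀ (c : (n ⊕ n ⊕ m) → ℝ) (i : m),
      (∑ k, c k • v k) i
        = (A *ᵥ fun j => c (Sum.inl j) - c (Sum.inr (Sum.inl j))) i
          + c (Sum.inr (Sum.inr i)) := by
    intro c i
    rw [sum_smul_apply]
    rw [Fintype.sum_sum_type, Fintype.sum_sum_type]
    simp only [hv, Sum.elim_inl, Sum.elim_inr, mulVec, dotProduct, PiLp.toLp_apply]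
    rw [show (∑ x : m, c (Sum.inr (Sum.inr x)) * if i = x then 1 else 0)
        = c (Sum.inr (Sum.inr i)) by
      simp [mul_ite, Finset.sum_ite_eq]]
    rw [← add_assoc, ← Finset.sum_add_distrib]
    congr 1
    exact Finset.sum_congr rfl fun j _ => by ring
  have hclosed : IsClosed (coneSet v) := isClosed_coneSet v
  set K : ConvexCone ℝ (EuclideanSpace ℝ m) :=
    { carrier := coneSet v
      smul_mem' := by
        rintro t ht x ⟨c, hc, rfl⟩
        refine ⟨fun k => t * c k, fun k => mul_nonneg ht.le (hc k), ?_⟩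
        rw [Finset.smul_sum]
        exact Finset.sum_congr rfl fun k _ => by rw [smul_smul]
      add_mem' := by
        rintro x ⟨c, hc, rfl⟩ y ⟨c', hc', rfl⟩
        refine ⟨c + c', fun k => add_nonneg (hc k) (hc' k), ?_⟩
        rw [← Finset.sum_add_distrib]
        exact Finset.sum_congr rfl fun k _ => (add_smul _ _ _).symm } with hK
  have hne : (K : Set (EuclideanSpace ℝ m)).Nonempty :=
    ⟨0, ⟨0, le_refl _, by simp⟩⟩
  have hb : (WithLp.toLp 2 b : EuclideanSpace ℝ m) ∉ K := by
    rintro ⟨c, hc, hbc⟩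
    refine h ⟨fun j => c (Sum.inl j) - c (Sum.inr (Sum.inl j)), fun i => ?_⟩
    have : (WithLp.toLp 2 b : EuclideanSpace ℝ m) i = (∑ k, c k • v k) i := by rw [hbc]
    rw [hcomb c i] at this
    have hnn : 0 ≤ c (Sum.inr (Sum.inr i)) := hc _
    change (b : m → ℝ) i = _ at this
    linarith [this]
  obtain ⟨u, hu1, hu2⟩ :=
    ProperCone.hyperplane_separation'
      ({ carrier := coneSet v
         add_mem' := fun ha hb => K.add_mem' ha hb
         zero_mem' := ⟨0, le_refl _, by simp⟩
         smul_mem' := by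
           rintro ⟨t, ht⟩ x ⟨c, hc, rfl⟩
           refine ⟨fun k => t * c k, fun k => mul_nonneg ht (hc k), ?_⟩
           show t • ∑ k, c k • v k = _
           rw [Finset.smul_sum]
           exact Finset.sum_congr rfl fun k _ => by rw [smul_smul]
         isClosed' := hclosed } : ProperCone ℝ (EuclideanSpace ℝ m)) hb
  have hinner : ∀ x y : EuclideanSpace ℝ m, ⟪x, y⟫_ℝ = ∑ i, x i * y i := by
    intro x y
    simp [PiLp.inner_apply, RCLike.inner_apply', conj_trivial]
    exact Finset.sum_congr rfl fun i _ => mul_comm _ _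
  have hgen : ∀ k, v k ∈ K := fun k => self_mem_coneSet v k
  refine ⟨u, ?_, ?_, ?_⟩
  · intro i
    have := hu1 _ (hgen (Sum.inr (Sum.inr i)))
    rw [hinner] at this
    simpa [hv, Finset.sum_ite_eq] using this
  · funext j
    have h1 := hu1 _ (hgen (Sum.inl j))
    have h2 := hu1 _ (hgen (Sum.inr (Sum.inl j)))
    rw [hinner] at h1 h2
    simp only [hv, Sum.elim_inl, Sum.elim_inr, PiLp.toLp_apply] at h1 h2
    have h2' : ∑ i, A i j * u i ≤ 0 := by
      have : ∑ i : m, -A i j * u i = -∑ i : m, A i j * u i := by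
        rw [← Finset.sum_neg_distrib]
        exact Finset.sum_congr rfl fun i _ => by ring
      linarith [this ▸ h2]
    have hz : ∑ i, A i j * u i = 0 := le_antisymm h2' h1
    simp only [Pi.zero_apply]
    rw [show (u ᵥ* A) j = ∑ i, u i * A i j from by simp [vecMul, dotProduct], ← hz]
    exact Finset.sum_congr rfl fun i _ => mul_comm _ _
  · rw [hinner] at hu2
    exact hu2
/-- Proposition 1 (market power test): if the single-level reformulation is feasible and
the restricted LP (with the strategic block of `y` forced to zero) is infeasible, then the
bilevel objective is unbounded above in the strategic cost `x_c`. -/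
theorem bilevel_unbounded_of_singlelevel_feasible_dual_infeasible
    (n1 n2 n3 me mi ml : ℕ)
    (xbar : Fin n1 → ℝ)
    (Aeq : Matrix (Fin me) ((Fin n1 ⊕ Fin n2) ⊕ Fin n3) ℝ)
    (Aineq : Matrix (Fin mi) ((Fin n1 ⊕ Fin n2) ⊕ Fin n3) ℝ)
    (Bineq : Matrix (Fin mi) (Fin ml) ℝ)
    (beq : Fin me → ℝ) (xl : Fin ml → ℝ)
    (hfeas : ∃ (xc : Fin n2 → ℝ) (lam : Fin me → ℝ) (mu : Fin mi → ℝ),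
      0 ≤ mu ∧
      Sum.elim (Sum.elim xbar xc) (0 : Fin n3 → ℝ) + Aeqᵀ *ᵥ lam + Aineqᵀ *ᵥ mu = 0)
    (hinfeas : ¬ ∃ y : ((Fin n1 ⊕ Fin n2) ⊕ Fin n3) → ℝ,
      Aeq *ᵥ y = beq ∧ Aineq *ᵥ y ≤ Bineq *ᵥ xl ∧
      ∀ i : Fin n2, y (Sum.inl (Sum.inr i)) = 0) :
    ∀ M : ℝ, ∃ xc : Fin n2 → ℝ,
      ∀ y : ((Fin n1 ⊕ Fin n2) ⊕ Fin n3) → ℝ,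
        Aeq *ᵥ y = beq → Aineq *ᵥ y ≤ Bineq *ᵥ xl →
        M < Sum.elim (Sum.elim xbar xc) (0 : Fin n3 → ℝ) ⬝ᵥ y := by
  classical
  obtain ⟨xc₀, lam, mu, hmu, hdual⟩ := hfeas
  set Emat : Matrix (Fin n2) ((Fin n1 ⊕ Fin n2) ⊕ Fin n3) ℝ :=
    Matrix.of fun i j => if j = Sum.inl (Sum.inr i) then 1 else 0 with hEmat
  have hEmul : ∀ y : ((Fin n1 ⊕ Fin n2) ⊕ Fin n3) → ℝ,
      Emat *ᵥ y = fun i => y (Sum.inl (Sum.inr i)) := by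
    intro y; funext i
    simp [hEmat, mulVec, dotProduct, ite_mul, Finset.sum_ite_eq]
  set Abig := fromRows Aeq (fromRows (-Aeq) (fromRows Aineq (fromRows Emat (-Emat)))) with hAbig
  set bbig : (Fin me ⊕ Fin me ⊕ Fin mi ⊕ Fin n2 ⊕ Fin n2) → ℝ :=
    Sum.elim beq (Sum.elim (-beq) (Sum.elim (Bineq *ᵥ xl) (Sum.elim 0 0))) with hbbig
  -- the combined system is infeasible
  have hbig_infeas : ¬ ∃ y, Abig *ᵥ y ≤ bbig := by
    rintro ⟨y, hy⟩
    have hy' : ∀ k, (Abig *ᵥ y) k ≤ bbig k := hy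
    refine hinfeas ⟨y, ?_, ?_, ?_⟩
    · funext i
      have h1 := hy' (Sum.inl i)
      have h2 := hy' (Sum.inr (Sum.inl i))
      simp [hAbig, hbbig, Matrix.neg_mulVec] at h1 h2
      linarith
    · intro i
      have h1 := hy' (Sum.inr (Sum.inr (Sum.inl i)))
      simpa [hAbig, hbbig] using h1
    · intro i
      have h1 := hy' (Sum.inr (Sum.inr (Sum.inr (Sum.inl i))))
      have h2 := hy' (Sum.inr (Sum.inr (Sum.inr (Sum.inr i))))
      simp [hAbig, hbbig, Matrix.neg_mulVec, hEmul y] at h1 h2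
      linarith
  obtain ⟨u, hu0, huA, hub⟩ := farkas_lemma Abig bbig hbig_infeas
  set p1 : Fin me → ℝ := fun i => u (Sum.inl i) with hp1
  set p2 : Fin me → ℝ := fun i => u (Sum.inr (Sum.inl i)) with hp2
  set q : Fin mi → ℝ := fun i => u (Sum.inr (Sum.inr (Sum.inl i))) with hq
  set r1 : Fin n2 → ℝ := fun i => u (Sum.inr (Sum.inr (Sum.inr (Sum.inl i)))) with hr1
  set r2 : Fin n2 → ℝ := fun i => u (Sum.inr (Sum.inr (Sum.inr (Sum.inr i)))) with hr2
  have hu_elim : u = Sum.elim p1 (Sum.elim p2 (Sum.elim q (Sum.elim r1 r2))) := by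
    funext k
    rcases k with k | k | k | k | k <;> rfl
  have hq0 : 0 ≤ q := fun i => hu0 _
  rw [hu_elim] at huA hub
  simp only [hAbig, sumElim_vecMul_fromRows, Matrix.vecMul_neg] at huA
  simp only [hbbig, sumElim_dotProduct_sumElim, dotProduct_zero, zero_dotProduct,
    neg_dotProduct, dotProduct_neg] at hub
  set p : Fin me → ℝ := p1 - p2 with hp
  set r : Fin n2 → ℝ := r1 - r2 with hr
  have hkey : r ᵥ* Emat = -(p ᵥ* Aeq) - q ᵥ* Aineq := by
    rw [hr, hp, Matrix.sub_vecMul, Matrix.sub_vecMul]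
    have := huA
    abel_nf at this ⊢
    linear_combination (norm := abel_nf) this
  have hlin : beq ⬝ᵥ p + (Bineq *ᵥ xl) ⬝ᵥ q < 0 := by
    rw [hp, dotProduct_sub]
    linarith [hub]
  set ε : ℝ := -(beq ⬝ᵥ p + (Bineq *ᵥ xl) ⬝ᵥ q) with hε
  have hεpos : 0 < ε := by rw [hε]; linarith
  -- dual lower bound on the fixed part of the objective
  set c₀ : ((Fin n1 ⊕ Fin n2) ⊕ Fin n3) → ℝ := Sum.elim (Sum.elim xbar xc₀) 0 with hc₀
  set L : ℝ := -(lam ⬝ᵥ beq) - mu ⬝ᵥ (Bineq *ᵥ xl) with hL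
  have hqmono : ∀ (w : Fin mi → ℝ) (a b : ((Fin n1 ⊕ Fin n2) ⊕ Fin n3) → ℝ), True := fun _ _ _ => trivial
  have hdotmono : ∀ (w a b : Fin mi → ℝ), 0 ≤ w → a ≤ b → w ⬝ᵥ a ≤ w ⬝ᵥ b := by
    intro w a b hw hab
    exact Finset.sum_le_sum fun i _ => mul_le_mul_of_nonneg_left (hab i) (hw i)
  have hlow : ∀ y, Aeq *ᵥ y = beq → Aineq *ᵥ y ≤ Bineq *ᵥ xl → L ≤ c₀ ⬝ᵥ y := by
    intro y hyeq hyineq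
    have hc0 : c₀ = -(Aeqᵀ *ᵥ lam) - Aineqᵀ *ᵥ mu := by
      have := hdual
      rw [hc₀] at this ⊢
      linear_combination (norm := abel_nf) this
    rw [hc0, sub_dotProduct, neg_dotProduct,
      Matrix.mulVec_transpose, Matrix.mulVec_transpose,
      ← Matrix.dotProduct_mulVec, ← Matrix.dotProduct_mulVec, hyeq]
    have := hdotmono mu _ _ hmu hyineq
    rw [hL]
    linarith
  have hdir : ∀ y, Aeq *ᵥ y = beq → Aineq *ᵥ y ≤ Bineq *ᵥ xl →
      ε ≤ r ⬝ᵥ (Emat *ᵥ y) := by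
    intro y hyeq hyineq
    rw [Matrix.dotProduct_mulVec, hkey, sub_dotProduct, neg_dotProduct,
      ← Matrix.dotProduct_mulVec, ← Matrix.dotProduct_mulVec, hyeq]
    have h1 := hdotmono q _ _ hq0 hyineq
    have h2 : p ⬝ᵥ beq = beq ⬝ᵥ p := dotProduct_comm _ _
    have h3 : q ⬝ᵥ (Bineq *ᵥ xl) = (Bineq *ᵥ xl) ⬝ᵥ q := dotProduct_comm _ _
    rw [hε]
    linarith
  intro M
  set t : ℝ := max ((M - L) / ε) 0 + 1 with htdef
  have ht0 : 0 ≤ t := by positivity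
  have htgt : (M - L) / ε < t := lt_of_le_of_lt (le_max_left _ _) (lt_add_one _)
  have htε : M - L < t * ε := (div_lt_iff₀ hεpos).mp htgt
  refine ⟨xc₀ + t • r, fun y hyeq hyineq => ?_⟩
  have hylim : y = Sum.elim (Sum.elim (fun i => y (Sum.inl (Sum.inl i)))
      (fun i => y (Sum.inl (Sum.inr i)))) (fun i => y (Sum.inr i)) := by
    funext k
    rcases k with (k | k) | k <;> rfl
  have hdecomp : Sum.elim (Sum.elim xbar (xc₀ + t • r)) (0 : Fin n3 → ℝ)
      = c₀ + t • Sum.elim (Sum.elim (0 : Fin n1 → ℝ) r) (0 : Fin n3 → ℝ) := by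
    funext k
    rcases k with (k | k) | k <;> simp [hc₀]
  have hrdot : Sum.elim (Sum.elim (0 : Fin n1 → ℝ) r) (0 : Fin n3 → ℝ) ⬝ᵥ y
      = r ⬝ᵥ (Emat *ᵥ y) := by
    conv_lhs => rw [hylim]
    rw [sumElim_dotProduct_sumElim, sumElim_dotProduct_sumElim, hEmul y]
    simp
  rw [hdecomp, add_dotProduct, smul_dotProduct, hrdot]
  have h1 := hlow y hyeq hyineq
  have h2 := hdir y hyeq hyineq
  have h3 : t * ε ≤ t * (r ⬝ᵥ (Emat *ᵥ y)) := mul_le_mul_of_nonneg_left h2 ht0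
  have : (t : ℝ) • (r ⬝ᵥ (Emat *ᵥ y)) = t * (r ⬝ᵥ (Emat *ᵥ y)) := rfl
  rw [this]
  linarith
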